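/- If M is a strong k-chromatic-choosable graph, then χ_ℓ(M □ K_{1,s}) = k if s < P_ℓ(M, k), and χ_ℓ(M □ K_{1,s}) = k + 1 if s ≥ P_ℓ(M, k). -/

import Mathlib

open SimpleGraph Finset

section ListColoringDefs

variable {V : Type*}

/-- `f` is a proper coloring of `G` choosing each color from the list `L v`. -/
def IsProperListColoring (G : SimpleGraph V) (L : V → Finset ℕ) (f : V → ℕ) : Prop :=
  (∀ v, f v ∈ L v) ∧ ∀ u v, G.Adj u v → f u ≠ f v

/-- `G` admits a proper coloring from the list assignment `L`. -/
def ListColorable (G : SimpleGraph V) (L : V → Finset ℕ) : Prop :=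
  ∃ f, IsProperListColoring G L f

/-- `G` is colorable from every list assignment with lists of size at least `m`. -/
def Choosable (G : SimpleGraph V) (m : ℕ) : Prop :=
  ∀ L : V → Finset ℕ, (∀ v, m ≤ (L v).card) → ListColorable G L

/-- The list chromatic number of `G`. -/
noncomputable def listChromaticNumber (G : SimpleGraph V) : ℕ :=
  sInf { m | Choosable G m }

/-- `G` is strong `k`-chromatic-choosable: `χ(G) = k` and every `(k-1)`-assignment
from which `G` is not colorable is constant. -/
def StrongCC (G : SimpleGraph V) (k : ℕ) : Prop :=
  G.chromaticNumber = (k : ℕ∞) ∧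
    ∀ L : V → Finset ℕ, (∀ v, (L v).card = k - 1) → ¬ ListColorable G L →
      ∀ u v : V, L u = L v

/-- The number of proper `L`-colorings of `G`. -/
noncomputable def numColorings (G : SimpleGraph V) (L : V → Finset ℕ) : ℕ :=
  Set.ncard { f : V → ℕ | IsProperListColoring G L f }

/-- The list color function `P_ℓ(G,k)`: the minimum number of proper `L`-colorings
over all `k`-assignments `L`. -/
noncomputable def listColorFunction (G : SimpleGraph V) (k : ℕ) : ℕ :=
  sInf { n | ∃ L : V → Finset ℕ, (∀ v, (L v).card = k) ∧ n = numColorings G L }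

/-- The chromatic polynomial `P(G,k)`: the number of proper colorings with colors
from `{0, …, k-1}`. -/
noncomputable def chromPoly (G : SimpleGraph V) (k : ℕ) : ℕ :=
  numColorings G (fun _ => Finset.range k)

/-- The join `G ∨ K_p` of `G` with the complete graph on `p` vertices. -/
def joinK (G : SimpleGraph V) (p : ℕ) : SimpleGraph (V ⊕ Fin p) :=
  SimpleGraph.fromRel (fun a b =>
    match a, b with
    | Sum.inl u, Sum.inl v => G.Adj u v
    | _, _ => True)

/-- The star `K_{1,s}`: center `none` adjacent to the `s` leaves. -/
def starGraph (s : ℕ) : SimpleGraph (Option (Fin s)) :=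
  SimpleGraph.fromRel (fun a _ => a = none)

/-- The cycle graph `C_n` on `Fin n` (for `n ≥ 3`). -/
def cycGraph (n : ℕ) : SimpleGraph (Fin n) :=
  SimpleGraph.fromRel (fun a b => b.val = (a.val + 1) % n)

end ListColoringDefs

/-!
A list coloring of `M □ K_{1,s}` is a coloring `f` of the central copy of `M` together with,
for every leaf `j`, a coloring of the `j`-th copy from the lists `L (v, j) \ {f v}`.
For strong `k`-chromatic-choosable `M`, an uncolorable assignment of lists of size `≥ k - 1` is
a constant `(k-1)`-assignment. Hence `M` is `k`-choosable, and for a `k`-assignment of a leaf at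
most one central coloring `f` makes that leaf uncolorable. If `s < P_ℓ(M,k)`, some of the
`≥ P_ℓ(M,k)` central colorings is therefore blocked by none of the `s` leaves. If
`s ≥ P_ℓ(M,k)`, take a `k`-assignment of `M` with `P_ℓ(M,k)` colorings and give each of them its
own leaf, with lists `{f v} ∪ B` for a fresh `(k-1)`-set `B`: whichever coloring the center
gets, its leaf has to be colored from `B`, which `χ(M) = k` forbids.
-/

section

variable {V : Type*}

section ListColoring

variable {G : SimpleGraph V} {L L' : V → Finset ℕ}

theorem ListColorable.mono (h : ListColorable G L) (hLL' : ∀ v, L v ⊆ L' v) :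
    ListColorable G L' :=
  let ⟨f, hf, hproper⟩ := h
  ⟨f, fun v => hLL' v (hf v), hproper⟩

theorem ListColorable.colorable_card {B : Finset ℕ} (h : ListColorable G L)
    (hLB : ∀ v, L v ⊆ B) : G.Colorable B.card := by
  obtain ⟨f, hf, hproper⟩ := h
  simpa using (Coloring.mk (fun v => (⟨f v, hLB v (hf v)⟩ : B))
    fun huv h => hproper _ _ huv (congrArg Subtype.val h)).colorable

theorem Choosable.colorable {m : ℕ} (h : Choosable G m) : G.Colorable m := by
  simpa using (h (fun _ => range m) fun _ => (card_range m).ge).colorable_card fun _ => le_rfl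

theorem Choosable.mono {a b : ℕ} (h : Choosable G a) (hab : a ≤ b) : Choosable G b :=
  fun L hL => h L fun v => hab.trans (hL v)

theorem choosable_of_forall_card_eq {k : ℕ}
    (h : ∀ L : V → Finset ℕ, (∀ v, (L v).card = k) → ListColorable G L) : Choosable G k := by
  intro L hL
  choose L' hL'L hL' using fun v => (L v).exists_subset_card_eq (hL v)
  exact (h L' hL').mono hL'L

theorem listChromaticNumber_eq_succ {n : ℕ} (h : Choosable G (n + 1)) (h' : ¬ Choosable G n) :
    listChromaticNumber G = n + 1 := by
  refine le_antisymm (Nat.sInf_le h) (Nat.succ_le_of_lt (lt_of_not_ge fun hle => h' ?_))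
  exact (Nat.sInf_mem (⟨n + 1, h⟩ : { m | Choosable G m }.Nonempty)).mono hle

theorem listColorFunction_le_numColorings {k : ℕ} (hL : ∀ v, (L v).card = k) :
    listColorFunction G k ≤ numColorings G L :=
  Nat.sInf_le ⟨L, hL, rfl⟩

theorem exists_numColorings_eq_listColorFunction (G : SimpleGraph V) (k : ℕ) :
    ∃ L : V → Finset ℕ, (∀ v, (L v).card = k) ∧ numColorings G L = listColorFunction G k := by
  obtain ⟨L, hL, h⟩ := Nat.sInf_mem (⟨_, fun _ => range k, fun _ => card_range k, rfl⟩ :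
    { n | ∃ L : V → Finset ℕ, (∀ v, (L v).card = k) ∧ n = numColorings G L }.Nonempty)
  exact ⟨L, hL, h.symm⟩

open Classical in
noncomputable def properListColorings [Fintype V] (G : SimpleGraph V) (L : V → Finset ℕ) :
    Finset (V → ℕ) :=
  {f ∈ Fintype.piFinset L | ∀ u v, G.Adj u v → f u ≠ f v}

variable [Fintype V]

theorem mem_properListColorings {f : V → ℕ} :
    f ∈ properListColorings G L ↔ IsProperListColoring G L f := by
  classical
  simp [properListColorings, IsProperListColoring]

theorem numColorings_eq_card : numColorings G L = (properListColorings G L).card := by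
  rw [numColorings, ← Set.ncard_coe_finset]
  congr 1
  ext f
  simp [mem_properListColorings]

end ListColoring

section Star

variable {M : SimpleGraph V} {s : ℕ}

theorem starGraph_adj {a b : Option (Fin s)} :
    (_root_.starGraph s).Adj a b ↔ a ≠ b ∧ (a = none ∨ b = none) := by
  simp [_root_.starGraph]

theorem listColorable_boxProd_starGraph_iff {L : V × Option (Fin s) → Finset ℕ} :
    ListColorable (M □ _root_.starGraph s) L ↔
      ∃ f, IsProperListColoring M (fun v => L (v, none)) f ∧
        ∀ j, ListColorable M fun v => L (v, some j) \ {f v} := by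
  constructor
  · rintro ⟨F, hF, hproper⟩
    refine ⟨fun v => F (v, none), ⟨fun v => hF _, fun u v huv => hproper _ _ ?_⟩, fun j => ?_⟩
    · exact boxProd_adj_left.2 huv
    refine ⟨fun v => F (v, some j), fun v => ?_, fun u v huv => hproper _ _ ?_⟩
    · have hne := hproper (v, some j) (v, none)
        (boxProd_adj_right.2 (_root_.starGraph_adj.2 (by simp)))
      simpa [hne] using hF (v, some j)
    · exact boxProd_adj_left.2 huv
  · rintro ⟨f, ⟨hf, hfproper⟩, hleaf⟩
    choose g hg hgproper using hleaf
    refine ⟨fun p => p.2.elim (f p.1) fun j => g j p.1, ?_, ?_⟩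
    · rintro ⟨v, _ | j⟩
      · exact hf v
      · exact (mem_sdiff.1 (hg j v)).1
    · have hgf : ∀ j v, g j v ≠ f v := fun j v => by simpa using (mem_sdiff.1 (hg j v)).2
      rintro ⟨u, _ | i⟩ ⟨v, _ | j⟩ hadj <;>
        simp only [boxProd_adj, _root_.starGraph_adj] at hadj <;> simp at hadj ⊢
      · exact hfproper u v hadj
      · exact hadj ▸ (hgf j u).symm
      · exact hadj ▸ hgf i u
      · exact hadj.2 ▸ hgproper i u v hadj.1

theorem Choosable.of_boxProd_starGraph {m : ℕ} (h : Choosable (M □ _root_.starGraph s) m) :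
    Choosable M m := fun L hL =>
  let ⟨f, hf, _⟩ := listColorable_boxProd_starGraph_iff.1 (h (fun p => L p.1) fun p => hL p.1)
  ⟨f, hf⟩

theorem Choosable.boxProd_starGraph_succ {k : ℕ} (h : Choosable M k) :
    Choosable (M □ _root_.starGraph s) (k + 1) := by
  intro L hL
  obtain ⟨f, hf⟩ := h _ fun v => (hL (v, none)).trans' k.le_succ
  refine listColorable_boxProd_starGraph_iff.2 ⟨f, hf, fun j => h _ fun v => ?_⟩
  have h₁ := le_card_sdiff {f v} (L (v, some j))
  rw [card_singleton] at h₁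
  have h₂ := hL (v, some j)
  omega

end Star

namespace StrongCC

variable {M : SimpleGraph V} {k : ℕ}

theorem not_colorable_sub_one (hM : StrongCC M k) (hk : 1 ≤ k) : ¬ M.Colorable (k - 1) :=
  (chromaticNumber_eq_iff_colorable_not_colorable.1 (by rw [hM.1]; norm_cast; omega)).2

theorem exists_adj (hM : StrongCC M k) (hk : 2 ≤ k) : ∃ u v, M.Adj u v :=
  ne_bot_iff_exists_adj.1 fun hbot =>
    hM.not_colorable_sub_one (by omega) ((colorable_one_iff.2 hbot).mono (by omega))

theorem eq_const_of_not_listColorable (hM : StrongCC M k) (hk : 2 ≤ k) {L : V → Finset ℕ}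
    (hL : ∀ v, k - 1 ≤ (L v).card) (hnc : ¬ ListColorable M L) :
    ∃ A : Finset ℕ, A.card = k - 1 ∧ ∀ v, L v = A := by
  classical
  have hconst : ∀ t : V → Finset ℕ, (∀ v, t v ⊆ L v) → (∀ v, (t v).card = k - 1) →
      ∀ u v, t u = t v :=
    fun t hsub hcard => hM.2 t hcard fun ht => hnc (ht.mono hsub)
  choose t ht htcard using fun v => (L v).exists_subset_card_eq (hL v)
  suffices hLt : ∀ v, L v = t v by
    obtain ⟨u, -, -⟩ := hM.exists_adj hk
    exact ⟨t u, htcard u, fun v => (hLt v).trans (hconst t ht htcard v u)⟩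
  intro v
  obtain ⟨u₀, v₀, hadj⟩ := hM.exists_adj hk
  have : Nontrivial V := ⟨⟨u₀, v₀, hadj.ne⟩⟩
  obtain ⟨u, hu⟩ := exists_ne v
  -- Changing `t` at `v` alone keeps it constant, so every `(k-1)`-subset of `L v` is `t u`.
  have hsubset : ∀ S ⊆ L v, S.card = k - 1 → S = t u := by
    intro S hS hScard
    have := hconst (Function.update t v S)
      (fun w => by rcases eq_or_ne w v with rfl | hw <;> simp [*])
      (fun w => by rcases eq_or_ne w v with rfl | hw <;> simp [*]) v u
    simpa [hu] using this
  refine subset_antisymm (fun x hx => ?_) (ht v)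
  obtain ⟨S, hxS, hSL, hScard⟩ :=
    exists_subsuperset_card_eq (singleton_subset_iff.2 hx) (by simp; omega) (hL v)
  rw [hsubset (t v) (ht v) (htcard v), ← hsubset S hSL hScard]
  exact hxS (mem_singleton_self x)

theorem choosable (hM : StrongCC M k) (hk : 2 ≤ k) : Choosable M k := by
  intro L hL
  by_contra hnc
  obtain ⟨A, hA, hLA⟩ := hM.eq_const_of_not_listColorable hk
    (fun v => (hL v).trans' (Nat.sub_le k 1)) hnc
  obtain ⟨u, -, -⟩ := hM.exists_adj hk
  have := hL u
  rw [hLA u, hA] at this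
  omega

theorem eq_insert_of_not_listColorable_sdiff (hM : StrongCC M k) (hk : 2 ≤ k)
    {L : V → Finset ℕ} (hL : ∀ v, (L v).card = k) {f : V → ℕ}
    (hnc : ¬ ListColorable M fun v => L v \ {f v}) :
    ∃ A : Finset ℕ, A.card = k - 1 ∧ ∀ v, f v ∉ A ∧ L v = insert (f v) A := by
  obtain ⟨A, hA, hLA⟩ := hM.eq_const_of_not_listColorable hk
    (fun v => by simpa [hL v] using le_card_sdiff {f v} (L v)) hnc
  refine ⟨A, hA, fun v => ⟨by simp [← hLA v], ?_⟩⟩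
  simp only [sdiff_singleton_eq_erase] at hLA
  have hfv : f v ∈ L v := by
    by_contra hfv
    have := congrArg card (hLA v)
    rw [erase_eq_of_notMem hfv, hL v, hA] at this
    omega
  rw [← hLA v, insert_erase hfv]

theorem eq_of_not_listColorable_sdiff (hM : StrongCC M k) (hk : 2 ≤ k)
    {L : V → Finset ℕ} (hL : ∀ v, (L v).card = k) {f g : V → ℕ}
    (hg : ∀ u v, M.Adj u v → g u ≠ g v) (hfnc : ¬ ListColorable M fun v => L v \ {f v})
    (hgnc : ¬ ListColorable M fun v => L v \ {g v}) : f = g := by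
  obtain ⟨A, hA, hfA⟩ := hM.eq_insert_of_not_listColorable_sdiff hk hL hfnc
  obtain ⟨B, hB, hgB⟩ := hM.eq_insert_of_not_listColorable_sdiff hk hL hgnc
  rcases eq_or_ne A B with rfl | hAB
  · funext v
    have : f v ∈ insert (g v) A := (hgB v).2 ▸ (hfA v).2 ▸ mem_insert_self (f v) A
    simpa [(hfA v).1] using this
  · -- An `a ∈ A \ B` lies in every `L v = insert (g v) B`, which forces `g ≡ a`.
    obtain ⟨a, haA, haB⟩ :=
      not_subset.1 fun hAB' => hAB (eq_of_subset_of_card_le hAB' (by omega))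
    have hga : ∀ v, g v = a := fun v => by
      have : a ∈ insert (g v) B := (hgB v).2 ▸ (hfA v).2 ▸ mem_insert_of_mem haA
      simpa [haB, eq_comm] using this
    obtain ⟨u, v, huv⟩ := hM.exists_adj hk
    exact absurd ((hga u).trans (hga v).symm) (hg u v huv)

end StrongCC

section BoxProdStar

variable [Fintype V] {M : SimpleGraph V} {k s : ℕ}

theorem StrongCC.choosable_boxProd_starGraph (hM : StrongCC M k) (hk : 2 ≤ k)
    (hs : s < listColorFunction M k) : Choosable (M □ _root_.starGraph s) k := by
  refine choosable_of_forall_card_eq fun L hL => ?_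
  set T := properListColorings M fun v => L (v, none)
  have hT : s < T.card := hs.trans_le <| by
    rw [← numColorings_eq_card]
    exact listColorFunction_le_numColorings fun v => hL _
  suffices ∃ f ∈ T, ∀ j, ListColorable M fun v => L (v, some j) \ {f v} by
    obtain ⟨f, hf, hleaf⟩ := this
    exact listColorable_boxProd_starGraph_iff.2 ⟨f, mem_properListColorings.1 hf, hleaf⟩
  by_contra! hblocked
  -- Pigeonhole: two central colorings would be blocked by the same leaf.
  choose φ hφ using fun f : T => hblocked f f.2
  obtain ⟨f, g, hfg, hφfg⟩ := Fintype.exists_ne_map_eq_of_card_lt φ (by simpa using hT)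
  refine hfg (Subtype.ext (hM.eq_of_not_listColorable_sdiff hk (fun v => hL (v, some (φ g)))
    (mem_properListColorings.1 g.2).2 ?_ (hφ g)))
  exact hφfg ▸ hφ f

theorem not_choosable_boxProd_starGraph_of_numColorings_le (hM : ¬ M.Colorable (k - 1))
    {L₀ : V → Finset ℕ} (hL₀ : ∀ v, (L₀ v).card = k) (hs : numColorings M L₀ ≤ s) :
    ¬ Choosable (M □ _root_.starGraph s) k := by
  intro hch
  set T := properListColorings M L₀
  have : Nonempty T := by
    obtain ⟨f, hf⟩ := hch.of_boxProd_starGraph L₀ fun v => (hL₀ v).ge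
    exact ⟨⟨f, mem_properListColorings.2 hf⟩⟩
  obtain ⟨ι⟩ := Function.Embedding.nonempty_of_card_le (α := T) (β := Fin s)
    (by rw [numColorings_eq_card] at hs; simpa using hs)
  obtain ⟨σ, hσ⟩ : ∃ σ : Fin s → T, σ.Surjective := ⟨_, Function.invFun_surjective ι.injective⟩
  obtain ⟨B, hBfresh, hB⟩ :=
    ((univ.biUnion L₀ : Set ℕ).toFinite.infinite_compl).exists_subset_card_eq (k - 1)
  have hσB : ∀ j v, (σ j : V → ℕ) v ∉ B := fun j v hB' => hBfresh hB' <| by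
    simpa using ⟨v, (mem_properListColorings.1 (σ j).2).1 v⟩
  -- Whatever coloring `f` the center gets, a leaf `j` with `σ j = f` is left with the lists `B`.
  obtain ⟨f, hf, hleaf⟩ := listColorable_boxProd_starGraph_iff.1 <|
    hch (fun p => p.2.elim (L₀ p.1) fun j => insert ((σ j : V → ℕ) p.1) B) <| by
      rintro ⟨v, _ | j⟩
      · exact (hL₀ v).ge
      · simp only [Option.elim, card_insert_of_notMem (hσB j v), hB]
        omega
  obtain ⟨j, hj⟩ := hσ ⟨f, mem_properListColorings.2 hf⟩
  refine hM (hB ▸ (hleaf j).colorable_card fun v x hx => ?_)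
  simp only [Option.elim, hj, mem_sdiff, mem_insert, mem_singleton] at hx
  tauto

end BoxProdStar

end

/-- the list chromatic number of `M □ K_{1,s}` for strong
`k`-chromatic-choosable `M` transitions from `k` to `k+1` at `s = P_ℓ(M,k)`. -/
theorem stmt_14 {V : Type*} [Fintype V] (M : SimpleGraph V) (k : ℕ) (hk : 2 ≤ k)
    (hM : StrongCC M k) (s : ℕ) :
    (s < listColorFunction M k →
      listChromaticNumber (M.boxProd (_root_.starGraph s)) = k) ∧
    (listColorFunction M k ≤ s →
      listChromaticNumber (M.boxProd (_root_.starGraph s)) = k + 1) := by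
  have hnot_colorable := hM.not_colorable_sub_one (by omega)
  refine ⟨fun hs => ?_, fun hs => ?_⟩
  · have hk' : k - 1 + 1 = k := Nat.sub_add_cancel (by omega)
    have := listChromaticNumber_eq_succ (n := k - 1)
      (hk' ▸ hM.choosable_boxProd_starGraph hk hs)
      fun h => hnot_colorable h.of_boxProd_starGraph.colorable
    rwa [hk'] at this
  · obtain ⟨L₀, hL₀, hP⟩ := exists_numColorings_eq_listColorFunction M k
    exact listChromaticNumber_eq_succ (hM.choosable hk).boxProd_starGraph_succ
      (not_choosable_boxProd_starGraph_of_numColorings_le hnot_colorable hL₀ (hP ▸ hs))
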